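/- Let A, B be Laurent polynomials in two variables q and a with natural number coefficients. If for infinitely many integers N the substitution A(q, q^N) is coefficientwise less than or equal to B(q, q^N) (as Laurent polynomials in q), then A is coefficientwise less than or equal to B. -/
import Mathlib


/-- Laurent polynomials in two variables `q`, `a` with natural number
coefficients are modelled as finitely supported functions `(ℤ × ℤ) →₀ ℕ` on exponent
pairs `(i, j)` for `q^i a^j`.  The substitution `A(q, q^N)` sends `q^i a^j` to `q^{i+Nj}`,
so its coefficient at `q^m` is the sum of coefficients `A (i,j)` over pairs with
`i + N*j = m`.  If for infinitely many integers `N` the substitution of `A` is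
coefficientwise `≤` that of `B`, then `A ≤ B` coefficientwise. -/
theorem stmt_0 (A B : (ℤ × ℤ) →₀ ℕ)
    (h : {N : ℤ |
        ∀ m : ℤ,
          (∑ p ∈ A.support.filter (fun p => p.1 + N * p.2 = m), A p) ≤
          (∑ p ∈ B.support.filter (fun p => p.1 + N * p.2 = m), B p)}.Infinite) :
    ∀ p : ℤ × ℤ, A p ≤ B p := by
  intro p
  set S : Finset (ℤ × ℤ) := A.support ∪ B.support with hS
  have hbad : (⋃ q ∈ (S : Set (ℤ × ℤ)),
      {N : ℤ | q ≠ p ∧ q.1 + N * q.2 = p.1 + N * p.2}).Finite := by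
    apply Set.Finite.biUnion S.finite_toSet
    intro q _
    apply Set.Subsingleton.finite
    intro x hx y hy
    rcases eq_or_ne q.2 p.2 with h2 | h2
    · exfalso
      have h1 : q.1 = p.1 := by
        have := hx.2; rw [h2] at this; linarith
      exact hx.1 (Prod.ext h1 h2)
    · have e1 := hx.2
      have e2 := hy.2
      have : x * (q.2 - p.2) = y * (q.2 - p.2) := by ring_nf; linarith
      exact mul_right_cancel₀ (sub_ne_zero.mpr h2) this
  obtain ⟨N, hN1, hN2⟩ := (h.diff hbad).nonempty
  have key : ∀ q ∈ S, q.1 + N * q.2 = p.1 + N * p.2 → q = p := by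
    intro q hq heq
    by_contra hne
    exact hN2 (Set.mem_biUnion hq ⟨hne, heq⟩)
  have sum_eq : ∀ (C : (ℤ × ℤ) →₀ ℕ), C.support ⊆ S →
      ∑ r ∈ C.support.filter (fun r => r.1 + N * r.2 = p.1 + N * p.2), C r = C p := by
    intro C hC
    have hfil : C.support.filter (fun r => r.1 + N * r.2 = p.1 + N * p.2)
        = C.support.filter (fun r => r = p) := by
      ext r
      simp only [Finset.mem_filter]
      constructor
      · rintro ⟨hr, heq⟩
        exact ⟨hr, key r (hC hr) heq⟩
      · rintro ⟨hr, rfl⟩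
        exact ⟨hr, rfl⟩
    rw [hfil, Finset.sum_filter, Finset.sum_ite_eq' C.support p C]
    split_ifs with hp
    · rfl
    · exact (Finsupp.notMem_support_iff.mp hp).symm
  have hA := sum_eq A Finset.subset_union_left
  have hB := sum_eq B Finset.subset_union_right
  have := hN1 (p.1 + N * p.2)
  rw [hA, hB] at this
  exact this
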